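/- With t_{i,j}(n) as defined by the standard recursion, for all n ≥ 2 and all integers i, j the identity t_{i,j}(n) + t_{i,j-1}(n-1) = Σ_{k ∈ ℤ} (-1)^{k+j} binom(k,j) (t_{i,k}(n) + t_{i+1,k}(n)) holds (the sum is finite since binom(k,j)=0 for k<j and t vanishes for k > 2n-i). -/

import Mathlib

/-- The integers `t_{i,j}(n)`: `t_{2,0}(1) = 1`,
`t_{i,j}(n) = (i-2) t_{i-1,j}(n-1) + t_{i-1,j-1}(n-1) + (i-3) t_{i-2,j}(n-1)` for `n ≥ 2`,
and `t_{i,j}(n) = 0` whenever `i ≤ n`, `j < 0` or `i + j > 2n`. -/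
def tt : ℕ → ℤ → ℤ → ℤ
  | 0, _, _ => 0
  | 1, i, j => if i = 2 ∧ j = 0 then 1 else 0
  | n + 2, i, j =>
      if i ≤ (n : ℤ) + 2 ∨ j < 0 ∨ 2 * ((n : ℤ) + 2) < i + j then 0
      else (i - 2) * tt (n + 1) (i - 1) j + tt (n + 1) (i - 1) (j - 1)
        + (i - 3) * tt (n + 1) (i - 2) j


/-- The binomial coefficient `binom(k, j)` for integer arguments, with the
convention that it vanishes unless `0 ≤ j ≤ k`. -/
def ichoose (k j : ℤ) : ℤ := if 0 ≤ j ∧ j ≤ k then (k.toNat.choose j.toNat : ℤ) else 0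

lemma tt_eq_zero (n : ℕ) (i j : ℤ) (h : i ≤ (n:ℤ) ∨ j < 0 ∨ 2*(n:ℤ) < i + j) : tt n i j = 0 := by
  match n with
  | 0 => rfl
  | 1 =>
    simp only [tt, ite_eq_right_iff]
    rintro ⟨rfl, rfl⟩
    push_cast at h; simp at h
  | n + 2 =>
    rw [tt.eq_def]
    simp only []
    rw [if_pos]
    push_cast at h ⊢; omega

lemma tt_supp (n : ℕ) (i j : ℤ) (h : j < 0 ∨ 2*(n:ℤ) < j) : tt n i j = 0 := by
  rcases h with h | h
  · exact tt_eq_zero n i j (Or.inr (Or.inl h))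
  · by_cases hi : i ≤ (n:ℤ)
    · exact tt_eq_zero n i j (Or.inl hi)
    · exact tt_eq_zero n i j (Or.inr (Or.inr (by omega)))

lemma tt_rec (n : ℕ) (i j : ℤ) :
    tt (n+2) i j = (i - 2) * tt (n + 1) (i - 1) j + tt (n + 1) (i - 1) (j - 1)
        + (i - 3) * tt (n + 1) (i - 2) j := by
  rw [tt.eq_def]
  simp only []
  split_ifs with h
  · rw [tt_eq_zero (n+1) (i-1) j (by push_cast; omega),
      tt_eq_zero (n+1) (i-1) (j-1) (by push_cast; omega),
      tt_eq_zero (n+1) (i-2) j (by push_cast; omega)]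
    ring
  · rfl

lemma sgn_add_one (m : ℤ) : (-1:ℤ) ^ (m+1).natAbs = -(-1:ℤ) ^ m.natAbs := by
  have h : Even (m+1).natAbs ↔ ¬ Even m.natAbs := by
    rw [Int.natAbs_even, Int.natAbs_even, Int.even_add_one]
  rcases Int.even_or_odd m with he | ho
  · have h1 : Even m.natAbs := Int.natAbs_even.mpr he
    have h2 : ¬ Even (m+1).natAbs := by rw [h]; simpa using h1
    rw [Even.neg_one_pow h1, (Nat.not_even_iff_odd.mp h2).neg_one_pow]
  · have h1 : ¬ Even m.natAbs := by rw [Int.natAbs_even]; exact (Int.not_even_iff_odd).mpr ho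
    have h2 : Even (m+1).natAbs := h.mpr h1
    rw [Even.neg_one_pow h2, (Nat.not_even_iff_odd.mp h1).neg_one_pow]
    ring

lemma sgn_sub_one (m : ℤ) : (-1:ℤ) ^ (m-1).natAbs = -(-1:ℤ) ^ m.natAbs := by
  have := sgn_add_one (m-1)
  simp only [sub_add_cancel] at this
  rw [this]; ring

lemma ichoose_eq (k j : ℤ) (hk : 0 ≤ k) (hj : 0 ≤ j) :
    ichoose k j = (k.toNat.choose j.toNat : ℤ) := by
  unfold ichoose
  split_ifs with h
  · rfl
  · rw [Nat.choose_eq_zero_of_lt (by omega)]; rfl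

lemma ichoose_neg (k j : ℤ) (hj : j < 0) : ichoose k j = 0 := by
  unfold ichoose; rw [if_neg]; omega

lemma ichoose_zero_left (j : ℤ) : ichoose 0 j = if j = 0 then 1 else 0 := by
  unfold ichoose
  split_ifs with h h2 h2
  · subst h2; rfl
  · exfalso; omega
  · exfalso; omega
  · rfl

lemma ichoose_one_left (j : ℤ) : ichoose 1 j = if j = 0 ∨ j = 1 then 1 else 0 := by
  unfold ichoose
  split_ifs with h h2 h2
  · rcases h2 with rfl | rfl <;> rfl
  · exfalso; omega
  · omega
  · rfl

lemma pascal (k j : ℤ) (hk : 0 ≤ k) : ichoose (k+1) j = ichoose k j + ichoose k (j-1) := by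
  rcases lt_or_ge j 0 with hj | hj
  · rw [ichoose_neg _ _ hj, ichoose_neg _ _ hj, ichoose_neg _ _ (by omega)]; ring
  rcases eq_or_lt_of_le hj with rfl | hj1
  · rw [ichoose_eq _ _ (by omega) le_rfl, ichoose_eq _ _ hk le_rfl,
      ichoose_neg _ _ (by omega)]
    simp
  · rw [ichoose_eq _ _ (by omega) hj, ichoose_eq _ _ hk hj, ichoose_eq _ _ hk (by omega)]
    have h1 : (k+1).toNat = k.toNat + 1 := by omega
    have h2 : j.toNat = (j-1).toNat + 1 := by omega
    rw [h1, h2, Nat.choose_succ_succ]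
    push_cast; ring

/-- coefficient -/
def co (j k : ℤ) : ℤ := (-1:ℤ) ^ ((k + j).natAbs) * ichoose k j

lemma co_pascal (j k : ℤ) (hk : 0 ≤ k) : co (j-1) k = co j k + co j (k+1) := by
  unfold co
  have h1 : k + (j-1) = (k+j) - 1 := by ring
  have h2 : (k+1) + j = (k+j) + 1 := by ring
  rw [h1, h2, sgn_add_one, sgn_sub_one, pascal k j hk]
  ring

lemma finsum_f (n : ℕ) (i j : ℤ) (B : ℤ) (hB : 2*(n:ℤ) ≤ B) :
    ∑ᶠ k : ℤ, co j k * (tt n i k + tt n (i+1) k)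
      = ∑ k ∈ Finset.Icc (0:ℤ) B, co j k * (tt n i k + tt n (i+1) k) := by
  apply finsum_eq_finset_sum_of_support_subset
  intro k hk
  simp only [Function.mem_support, ne_eq] at hk
  by_contra hmem
  apply hk
  have hk' : k < 0 ∨ 2*(n:ℤ) < k := by
    simp only [Finset.coe_Icc, Set.mem_Icc] at hmem
    omega
  rw [tt_supp n i k hk', tt_supp n (i+1) k hk']
  ring

lemma tt_one (i j : ℤ) : tt 1 i j = if i = 2 ∧ j = 0 then 1 else 0 := rfl

lemma tt_two (i j : ℤ) : tt 2 i j = if (i = 3 ∧ (j = 0 ∨ j = 1)) ∨ (i = 4 ∧ j = 0) then 1 else 0 := by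
  have : tt 2 i j = tt (0+2) i j := rfl
  rw [this, tt_rec 0 i j]
  simp only [tt]
  split_ifs <;> omega

lemma sum01 (i j : ℤ) : ∑ᶠ k : ℤ, co j k * (tt 2 i k + tt 2 (i+1) k)
    = co j 0 * (tt 2 i 0 + tt 2 (i+1) 0) + co j 1 * (tt 2 i 1 + tt 2 (i+1) 1) := by
  have hsub : Function.support (fun k => co j k * (tt 2 i k + tt 2 (i+1) k))
      ⊆ ((({0,1} : Finset ℤ)) : Set ℤ) := by
    intro k hk
    simp only [Function.mem_support, ne_eq] at hk
    by_contra hmem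
    simp only [Finset.coe_insert, Set.mem_insert_iff, Finset.coe_singleton,
      Set.mem_singleton_iff] at hmem
    push_neg at hmem
    apply hk
    rw [tt_two, tt_two, if_neg (by omega), if_neg (by omega)]
    ring
  rw [finsum_eq_finset_sum_of_support_subset _ hsub, Finset.sum_pair (by norm_num)]

lemma key0 (i j : ℤ) : tt 2 i j + tt 1 i (j-1) = ∑ᶠ k : ℤ, co j k * (tt 2 i k + tt 2 (i+1) k) := by
  rw [sum01]
  by_cases h0 : j = 0
  · subst h0
    simp only [tt_two, tt_one, co, ichoose_zero_left, ichoose_one_left]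
    norm_num
    split_ifs <;> omega
  by_cases h1 : j = 1
  · subst h1
    simp only [tt_two, tt_one, co, ichoose_zero_left, ichoose_one_left]
    norm_num
    split_ifs <;> omega
  · have c0 : co j 0 = 0 := by unfold co; rw [ichoose_zero_left, if_neg h0]; ring
    have c1 : co j 1 = 0 := by
      unfold co; rw [ichoose_one_left, if_neg (by tauto)]; ring
    rw [c0, c1, tt_two, if_neg (by omega), tt_one, if_neg (by omega)]
    ring

lemma key (n : ℕ) : ∀ i j : ℤ,
    tt (n+2) i j + tt (n+1) i (j-1) = ∑ᶠ k : ℤ, co j k * (tt (n+2) i k + tt (n+2) (i+1) k) := by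
  induction n with
  | zero => exact key0
  | succ n IH =>
    intro i j
    set B : ℤ := 2*(n:ℤ) + 6 with hBdef
    -- instantiate the IH
    have I1 := IH (i-1) j
    have I2 := IH (i-1) (j-1)
    have I3 := IH (i-2) j
    have hB2 : 2*((n+2:ℕ):ℤ) ≤ B := by push_cast; omega
    have hB3 : 2*((n+3:ℕ):ℤ) ≤ B := by push_cast; omega
    rw [finsum_f (n+2) (i-1) j B hB2] at I1
    rw [finsum_f (n+2) (i-1) (j-1) B hB2] at I2
    rw [finsum_f (n+2) (i-2) j B hB2] at I3
    show tt (n+3) i j + tt (n+2) i (j-1)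
        = ∑ᶠ k : ℤ, co j k * (tt (n+3) i k + tt (n+3) (i+1) k)
    rw [finsum_f (n+3) i j B hB3]
    simp only [show i-1+1 = i from by ring, show i-2+1 = i-1 from by ring] at I1 I2 I3
    -- expand the summand on the right
    have hsum : ∑ k ∈ Finset.Icc (0:ℤ) B, co j k * (tt (n+3) i k + tt (n+3) (i+1) k)
        = ∑ k ∈ Finset.Icc (0:ℤ) B,
            ((i-2) * (co j k * (tt (n+2) (i-1) k + tt (n+2) i k))
              + (i-3) * (co j k * (tt (n+2) (i-2) k + tt (n+2) (i-1) k))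
              + co j k * (tt (n+2) (i-1) k + tt (n+2) i k)
              + co j k * (tt (n+2) (i-1) (k-1) + tt (n+2) i (k-1))) := by
      apply Finset.sum_congr rfl
      intro k _
      rw [show tt (n+3) i k = tt (n+1+2) i k from rfl,
        show tt (n+3) (i+1) k = tt (n+1+2) (i+1) k from rfl,
        tt_rec (n+1) i k, tt_rec (n+1) (i+1) k]
      simp only [show (n:ℕ)+1+1 = n+2 from rfl, show i+1-1 = i from by ring,
        show i+1-2 = i-1 from by ring, show i+1-3 = i-2 from by ring]
      ring
    -- split the sum
    rw [hsum, Finset.sum_add_distrib, Finset.sum_add_distrib, Finset.sum_add_distrib,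
      ← Finset.mul_sum, ← Finset.mul_sum]
    -- the shifted sum
    have hshift : ∑ k ∈ Finset.Icc (0:ℤ) B, co j k * (tt (n+2) (i-1) (k-1) + tt (n+2) i (k-1))
        = ∑ k ∈ Finset.Icc (0:ℤ) B, co j (k+1) * (tt (n+2) (i-1) k + tt (n+2) i k) := by
      have hmap : Finset.Icc (0:ℤ) B
          = Finset.map ⟨fun k => k+1, add_left_injective 1⟩ (Finset.Icc (-1) (B-1)) := by
        ext x
        simp only [Finset.mem_Icc, Finset.mem_map, Function.Embedding.coeFn_mk]
        constructor
        · intro hx; exact ⟨x-1, by omega, by ring⟩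
        · rintro ⟨y, hy, rfl⟩; omega
      have hzero : ∀ x : ℤ, x < 0 ∨ 2*((n+2:ℕ):ℤ) < x →
          co j (x+1) * (tt (n+2) (i-1) x + tt (n+2) i x) = 0 := by
        intro x hx
        rw [tt_supp _ _ _ hx, tt_supp _ _ _ hx]
        ring
      conv_lhs => rw [hmap, Finset.sum_map]
      simp only [Function.Embedding.coeFn_mk, add_sub_cancel_right]
      have sub1 : Finset.Icc (-1:ℤ) (B-1) ⊆ Finset.Icc (-1:ℤ) B :=
        Finset.Icc_subset_Icc le_rfl (by omega)
      have sub2 : Finset.Icc (0:ℤ) B ⊆ Finset.Icc (-1:ℤ) B :=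
        Finset.Icc_subset_Icc (by omega) le_rfl
      rw [Finset.sum_subset sub1
        (fun x hx hnx => hzero x (by simp only [Finset.mem_Icc] at hx hnx; push_cast; omega)),
        ← Finset.sum_subset sub2
        (fun x hx hnx => hzero x (by simp only [Finset.mem_Icc] at hx hnx; push_cast; omega))]
    rw [hshift]
    -- merge the two unscaled sums using Pascal's rule
    have hmerge : (∑ k ∈ Finset.Icc (0:ℤ) B, co j k * (tt (n+2) (i-1) k + tt (n+2) i k))
        + ∑ k ∈ Finset.Icc (0:ℤ) B, co j (k+1) * (tt (n+2) (i-1) k + tt (n+2) i k)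
        = ∑ k ∈ Finset.Icc (0:ℤ) B, co (j-1) k * (tt (n+2) (i-1) k + tt (n+2) i k) := by
      rw [← Finset.sum_add_distrib]
      apply Finset.sum_congr rfl
      intro k hk
      rw [co_pascal j k (Finset.mem_Icc.mp hk).1]
      ring
    rw [add_assoc, hmerge]
    -- now use the recursion on the left-hand side
    rw [show tt (n+3) i j = tt (n+1+2) i j from rfl, tt_rec (n+1) i j, tt_rec n i (j-1)]
    simp only [show (n:ℕ)+1+1 = n+2 from rfl]
    rw [← I1, ← I2, ← I3]
    ring

/-- For `n ≥ 2` and all integers `i`, `j`: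
`t_{i,j}(n) + t_{i,j-1}(n-1) = ∑_{k ∈ ℤ} (-1)^{k+j} binom(k,j) (t_{i,k}(n) + t_{i+1,k}(n))`,
the sum over `k ∈ ℤ` having finite support. -/
theorem stmt10 (n : ℕ) (hn : 2 ≤ n) (i j : ℤ) :
    tt n i j + tt (n - 1) i (j - 1) =
      ∑ᶠ k : ℤ, (-1 : ℤ) ^ ((k + j).natAbs) * ichoose k j * (tt n i k + tt n (i + 1) k) := by
  obtain ⟨m, rfl⟩ : ∃ m, n = m + 2 := ⟨n - 2, by omega⟩
  exact key m i j
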